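/- Let γ > 0 and b > 0. For every f ∈ C([0,∞]) and every t > 0, the function P_t^{γ,b} f is continuous on [0,∞) and admits a finite limit at +∞ (i.e. P_t^{γ,b} f ∈ C([0,∞])), ‖P_t^{γ,b} f‖_∞ ≤ ‖f‖_∞, and lim_{t → 0⁺} sup_{x ≥ 0} |P_t^{γ,b} f(x) − f(x)| = 0. -/

import Mathlib

/-!
`P_t f(x)` is the mean of `f(γ t G)`, where `G` has the Gamma(`N + b/γ`) law and `N` is Poisson
with parameter `u = x/(γ t)`. Being an average of values of `f`, it is bounded by `‖f‖_∞`, and as a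
power series in `u` with bounded coefficients times `e^{-u}` it is continuous in `x`. The variable
`γ t G - x` has second moment `2γ t x + (γ b + b²) t²`. A function continuous on `[0, ∞]` satisfies
`|f a - f x| ≤ ε + C ((a - x)/(1 + x))²`, so averaging gives
`|P_t f(x) - f(x)| ≤ ε + C t (2γ + (γ b + b²) t)/(1 + x)`. This yields the uniform convergence as
`t → 0⁺` and, letting `x → ∞` for fixed `t`, the limit of `P_t f` at `+∞`.
-/

open MeasureTheory

/-- The semigroup `P_t^{γ,b}` (case `b > 0`):
`P_t^{γ,b} f(x) = e^{−x/(γt)} ∑_{m=0}^∞ (x/(γt))^m (1/(m! Γ(m + b/γ)))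
  ∫_0^∞ e^{−z} z^{m + b/γ − 1} f(γzt) dz`. -/
noncomputable def Psem (γ b t : ℝ) (f : ℝ → ℝ) (x : ℝ) : ℝ :=
  Real.exp (-x / (γ * t)) *
    ∑' m : ℕ, (x / (γ * t)) ^ m * (1 / ((m.factorial : ℝ) * Real.Gamma ((m : ℝ) + b / γ))) *
      ∫ z in Set.Ioi (0:ℝ), Real.exp (-z) * z ^ ((m : ℝ) + b / γ - 1) * f (γ * z * t)

/-- The supremum norm of `f` over `[0, ∞)`. -/
noncomputable def supIci (f : ℝ → ℝ) : ℝ := ⨆ y : Set.Ici (0:ℝ), |f (y : ℝ)|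

open Real Set Filter Topology

lemma hasSum_pow_div_factorial (u : ℝ) : HasSum (fun m : ℕ => u ^ m / m.factorial) (exp u) := by
  rw [exp_eq_exp_ℝ]
  exact NormedSpace.expSeries_div_hasSum_exp u

lemma hasSum_pow_div_factorial_mul_descFactorial (u : ℝ) (k : ℕ) :
    HasSum (fun m : ℕ => u ^ m / m.factorial * m.descFactorial k) (u ^ k * exp u) := by
  induction k with
  | zero => simpa using hasSum_pow_div_factorial u
  | succ k ih =>
    refine (hasSum_nat_add_iff' 1).mp ?_
    have hshift : ∀ m : ℕ, u ^ (m + 1) / (m + 1).factorial * ((m + 1).descFactorial (k + 1) : ℝ)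
        = u * (u ^ m / m.factorial * m.descFactorial k) := fun m => by
      rw [Nat.succ_descFactorial_succ, Nat.factorial_succ]
      push_cast
      field_simp
      ring
    simp only [hshift, Finset.sum_range_one, Nat.zero_descFactorial_succ, Nat.cast_zero, mul_zero,
      sub_zero]
    rw [pow_succ, mul_comm (u ^ k), mul_assoc]
    exact ih.mul_left u

lemma hasSum_pow_div_factorial_mul_sq_add (u β : ℝ) :
    HasSum (fun m : ℕ => u ^ m / m.factorial * ((m + β - u) ^ 2 + (m + β)))
      ((2 * u + β + β ^ 2) * exp u) := by
  have h := ((hasSum_pow_div_factorial_mul_descFactorial u 2).add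
    ((hasSum_pow_div_factorial_mul_descFactorial u 1).mul_left (2 * (β - u) + 2))).add
    ((hasSum_pow_div_factorial_mul_descFactorial u 0).mul_left ((β - u) ^ 2 + β))
  convert h using 1
  · funext m
    simp only [Nat.descFactorial_succ, Nat.descFactorial_zero]
    rcases m with _ | m <;> push_cast [Nat.sub_self, Nat.succ_sub_one] <;> ring
  · ring

lemma abs_exp_neg_mul_tsum_sub_le {u r S : ℝ} (hu : 0 ≤ u) {A B : ℕ → ℝ}
    (hAB : ∀ m, |A m - r| ≤ B m) (hB : HasSum (fun m : ℕ => u ^ m / m.factorial * B m) S) :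
    |exp (-u) * ∑' m : ℕ, u ^ m / m.factorial * A m - r| ≤ exp (-u) * S := by
  have hw : ∀ m : ℕ, 0 ≤ u ^ m / m.factorial := fun m => by positivity
  have hbound : ∀ m, ‖u ^ m / m.factorial * (A m - r)‖ ≤ u ^ m / m.factorial * B m := fun m => by
    rw [Real.norm_eq_abs, abs_mul, abs_of_nonneg (hw m)]
    exact mul_le_mul_of_nonneg_left (hAB m) (hw m)
  have hsum : Summable fun m : ℕ => u ^ m / m.factorial * (A m - r) :=
    .of_norm_bounded hB.summable hbound
  have hA : HasSum (fun m : ℕ => u ^ m / m.factorial * A m)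
      (∑' m : ℕ, u ^ m / m.factorial * (A m - r) + exp u * r) := by
    convert hsum.hasSum.add ((hasSum_pow_div_factorial u).mul_right r) using 1
    funext m
    ring
  rw [hA.tsum_eq, mul_add, ← mul_assoc, ← exp_add, neg_add_cancel, exp_zero, one_mul,
    add_sub_cancel_right, abs_mul, abs_of_pos (exp_pos _)]
  gcongr
  exact (norm_tsum_le_tsum_norm hsum.norm).trans (hasSum_le hbound hsum.norm.hasSum hB)

lemma continuous_tsum_pow_div_factorial_mul {a : ℕ → ℝ} {M : ℝ} (ha : ∀ m, |a m| ≤ M) :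
    Continuous fun u : ℝ => ∑' m : ℕ, u ^ m / m.factorial * a m := by
  refine continuous_iff_continuousAt.2 fun u₀ => ?_
  have hR : ContinuousOn (fun u : ℝ => ∑' m : ℕ, u ^ m / m.factorial * a m)
      (Metric.closedBall 0 (|u₀| + 1)) := by
    refine continuousOn_tsum (fun m => by fun_prop)
      ((Real.summable_pow_div_factorial (|u₀| + 1)).mul_right M) fun m u hu => ?_
    rw [mem_closedBall_zero_iff, Real.norm_eq_abs] at hu
    rw [Real.norm_eq_abs, abs_mul, abs_div, abs_pow, Nat.abs_cast]
    have hM : 0 ≤ M := (abs_nonneg _).trans (ha 0)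
    gcongr
    exact ha m
  exact hR.continuousAt (Metric.closedBall_mem_nhds_of_mem (by simp))

section GammaMean

noncomputable def gammaMean (s : ℝ) (g : ℝ → ℝ) : ℝ :=
  (∫ z in Ioi 0, exp (-z) * z ^ (s - 1) * g z) / Gamma s

variable {s : ℝ}

lemma gammaKernel_mul_pow_eq (n : ℕ) {z : ℝ} (hz : z ∈ Ioi (0 : ℝ)) :
    exp (-z) * z ^ (s - 1) * z ^ n = exp (-z) * z ^ (s + n - 1) := by
  rw [mul_assoc, ← rpow_add_natCast (ne_of_gt hz), sub_add_eq_add_sub]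

lemma integrableOn_gammaKernel_mul_pow (hs : 0 < s) (n : ℕ) :
    IntegrableOn (fun z => exp (-z) * z ^ (s - 1) * z ^ n) (Ioi 0) :=
  (GammaIntegral_convergent (by positivity : 0 < s + n)).congr_fun
    (fun _ hz => (gammaKernel_mul_pow_eq n hz).symm) measurableSet_Ioi

lemma integral_gammaKernel_mul_pow (hs : 0 < s) (n : ℕ) :
    ∫ z in Ioi 0, exp (-z) * z ^ (s - 1) * z ^ n = Gamma (s + n) := by
  rw [setIntegral_congr_fun measurableSet_Ioi (fun _ hz => gammaKernel_mul_pow_eq n hz),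
    Gamma_eq_integral (by positivity)]

lemma gammaKernel_mul_quadratic_eq (ε K c x z : ℝ) :
    exp (-z) * z ^ (s - 1) * (ε + K * (c * z - x) ^ 2)
      = (ε + K * x ^ 2) * (exp (-z) * z ^ (s - 1) * z ^ 0)
        + (-(2 * K * c * x)) * (exp (-z) * z ^ (s - 1) * z ^ 1)
        + K * c ^ 2 * (exp (-z) * z ^ (s - 1) * z ^ 2) := by
  ring

lemma integrableOn_gammaKernel_mul_quadratic (hs : 0 < s) (ε K c x : ℝ) :
    IntegrableOn (fun z => exp (-z) * z ^ (s - 1) * (ε + K * (c * z - x) ^ 2)) (Ioi 0) := by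
  simp only [gammaKernel_mul_quadratic_eq]
  exact ((((integrableOn_gammaKernel_mul_pow hs 0).const_mul _).add
    ((integrableOn_gammaKernel_mul_pow hs 1).const_mul _))).add
    ((integrableOn_gammaKernel_mul_pow hs 2).const_mul _)

lemma gammaMean_quadratic (hs : 0 < s) (ε K c x : ℝ) :
    gammaMean s (fun z => ε + K * (c * z - x) ^ 2) = ε + K * ((c * s - x) ^ 2 + c ^ 2 * s) := by
  have hΓ : Gamma s ≠ 0 := (Gamma_pos_of_pos hs).ne'
  have h0 := (integrableOn_gammaKernel_mul_pow hs 0).const_mul (ε + K * x ^ 2)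
  have h1 := (integrableOn_gammaKernel_mul_pow hs 1).const_mul (-(2 * K * c * x))
  have h2 := (integrableOn_gammaKernel_mul_pow hs 2).const_mul (K * c ^ 2)
  have h01 : IntegrableOn (fun z => (ε + K * x ^ 2) * (exp (-z) * z ^ (s - 1) * z ^ 0)
      + (-(2 * K * c * x)) * (exp (-z) * z ^ (s - 1) * z ^ 1)) (Ioi 0) := h0.add h1
  have hΓ1 : Gamma (s + 1) = s * Gamma s := Gamma_add_one hs.ne'
  have hΓ2 : Gamma (s + 2) = (s + 1) * (s * Gamma s) := by
    rw [← hΓ1, show s + 2 = s + 1 + 1 by ring, Gamma_add_one (by positivity)]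
  simp only [gammaMean, gammaKernel_mul_quadratic_eq]
  rw [integral_add h01 h2, integral_add h0 h1, integral_const_mul, integral_const_mul,
    integral_const_mul, integral_gammaKernel_mul_pow hs, integral_gammaKernel_mul_pow hs,
    integral_gammaKernel_mul_pow hs]
  push_cast
  rw [add_zero, hΓ1, hΓ2]
  field_simp
  ring

lemma gammaMean_const (hs : 0 < s) (c : ℝ) : gammaMean s (fun _ => c) = c := by
  simpa using gammaMean_quadratic hs c 0 0 0

lemma abs_gammaMean_sub_le (hs : 0 < s) {g h : ℝ → ℝ} {r : ℝ} (hg : ContinuousOn g (Ioi 0))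
    (hh : IntegrableOn (fun z => exp (-z) * z ^ (s - 1) * h z) (Ioi 0))
    (hgh : ∀ z ∈ Ioi (0 : ℝ), |g z - r| ≤ h z) :
    |gammaMean s g - r| ≤ gammaMean s h := by
  have hΓ : 0 < Gamma s := Gamma_pos_of_pos hs
  have hk : IntegrableOn (fun z => exp (-z) * z ^ (s - 1)) (Ioi 0) := GammaIntegral_convergent hs
  have hkpos : ∀ z ∈ Ioi (0 : ℝ), 0 ≤ exp (-z) * z ^ (s - 1) := fun z hz =>
    mul_nonneg (exp_pos _).le (rpow_nonneg (le_of_lt hz) _)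
  have hcont : ContinuousOn (fun z => exp (-z) * z ^ (s - 1) * (g z - r)) (Ioi 0) :=
    ((continuous_exp.comp continuous_neg).continuousOn.mul
      fun z hz => (continuousAt_rpow_const z _ (Or.inl (ne_of_gt hz))).continuousWithinAt).mul
      (hg.sub continuousOn_const)
  have hbound : ∀ z ∈ Ioi (0 : ℝ), ‖exp (-z) * z ^ (s - 1) * (g z - r)‖
      ≤ exp (-z) * z ^ (s - 1) * h z := fun z hz => by
    rw [Real.norm_eq_abs, abs_mul, abs_of_nonneg (hkpos z hz)]
    exact mul_le_mul_of_nonneg_left (hgh z hz) (hkpos z hz)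
  have hdiff : IntegrableOn (fun z => exp (-z) * z ^ (s - 1) * (g z - r)) (Ioi 0) :=
    hh.mono' (hcont.aestronglyMeasurable measurableSet_Ioi)
      ((ae_restrict_iff' measurableSet_Ioi).2 (.of_forall hbound))
  have hsub : gammaMean s g - r = (∫ z in Ioi 0, exp (-z) * z ^ (s - 1) * (g z - r)) / Gamma s := by
    have hg' : IntegrableOn (fun z => exp (-z) * z ^ (s - 1) * g z) (Ioi 0) :=
      (hdiff.add (hk.mul_const r)).congr_fun (fun z _ => by simp only [Pi.add_apply]; ring)
        measurableSet_Ioi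
    simp only [mul_sub, gammaMean]
    rw [integral_sub hg' (hk.mul_const r), integral_mul_const, ← Gamma_eq_integral hs]
    field_simp
  rw [hsub, abs_div, abs_of_pos hΓ, gammaMean]
  gcongr
  exact (abs_integral_le_integral_abs).trans
    (setIntegral_mono_on hdiff.abs hh measurableSet_Ioi fun z hz => hbound z hz)

end GammaMean

section LimitAtTop

variable {f : ℝ → ℝ} {l : ℝ}

lemma exists_abs_le_of_continuousOn_of_tendsto (hf : ContinuousOn f (Ici 0))
    (hl : Tendsto f atTop (𝓝 l)) : ∃ M, ∀ y ∈ Ici (0 : ℝ), |f y| ≤ M := by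
  obtain ⟨K, hK⟩ := eventually_atTop.1 (hl.abs.eventually_lt_const (lt_add_one |l|))
  obtain ⟨C, hC⟩ :=
    isCompact_Icc.exists_bound_of_continuousOn (hf.mono (Icc_subset_Ici_self : Icc 0 K ⊆ Ici 0))
  refine ⟨max C (|l| + 1), fun y hy => ?_⟩
  rcases le_total y K with hyK | hKy
  · exact (hC y ⟨hy, hyK⟩).trans (le_max_left _ _)
  · exact (hK y hKy).le.trans (le_max_right _ _)

/-- The weight `(1 + x)⁻²` is what makes the resulting bound on `P_t f - f` uniform in `x`:
the second moment of `γ t G - x` under `P_t` grows linearly in `x`. -/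
lemma exists_abs_sub_le_add_mul_sq (hf : ContinuousOn f (Ici 0)) (hl : Tendsto f atTop (𝓝 l))
    {ε : ℝ} (hε : 0 < ε) :
    ∃ C, 0 ≤ C ∧ ∀ x ∈ Ici (0 : ℝ), ∀ a ∈ Ici (0 : ℝ),
      |f a - f x| ≤ ε + C * ((a - x) / (1 + x)) ^ 2 := by
  obtain ⟨M, hM⟩ := exists_abs_le_of_continuousOn_of_tendsto hf hl
  have hM0 : 0 ≤ M := (abs_nonneg _).trans (hM 0 self_mem_Ici)
  have hfar : ∀ x ∈ Ici (0 : ℝ), ∀ a ∈ Ici (0 : ℝ), |f a - f x| ≤ 2 * M := fun x hx a ha =>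
    (abs_sub _ _).trans (by linarith [hM a ha, hM x hx])
  obtain ⟨K, hK0, hK⟩ : ∃ K, 0 ≤ K ∧ ∀ y, K ≤ y → |f y - l| < ε / 2 := by
    obtain ⟨K, hK⟩ := eventually_atTop.1
      ((hl.sub_const l).abs.eventually_lt_const (show |l - l| < ε / 2 by simpa using hε))
    exact ⟨max K 0, le_max_right _ _, fun y hy => hK y ((le_max_left _ _).trans hy)⟩
  obtain ⟨δ, hδ, hδf⟩ := Metric.uniformContinuousOn_iff.1
    (isCompact_Icc.uniformContinuousOn_of_continuous
      (hf.mono (Icc_subset_Ici_self : Icc 0 (2 * K + 2) ⊆ Ici 0))) ε hε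
  set δ' := min δ 1
  have hδ' : 0 < δ' := lt_min hδ one_pos
  set C := 2 * M * ((2 * K + 2) / δ') ^ 2 + 8 * M with hC
  refine ⟨C, by positivity, fun x hx a ha => ?_⟩
  have hx1 : 0 < 1 + x := by linarith [mem_Ici.1 hx]
  set q := ((a - x) / (1 + x)) ^ 2 with hq
  have hq0 : 0 ≤ q := sq_nonneg _
  have hCq : C * q = 2 * M * ((2 * K + 2) / δ') ^ 2 * q + 8 * M * q := by rw [hC]; ring
  have hRq : 0 ≤ 2 * M * ((2 * K + 2) / δ') ^ 2 * q := mul_nonneg (by positivity) hq0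
  have hMq : 0 ≤ 8 * M * q := by positivity
  rcases le_or_gt x (2 * K + 1) with hxK | hxK
  · rcases lt_or_ge |a - x| δ' with hax | hax
    · have hax' := abs_lt.1 hax
      have := hδf a ⟨ha, by linarith [min_le_right δ 1]⟩ x ⟨hx, by linarith⟩
        (by rw [Real.dist_eq]; exact hax.trans_le (min_le_left _ _))
      rw [Real.dist_eq] at this
      linarith
    · -- `|a - x| ≥ δ'` and `1 + x ≤ 2K + 2` make the penalty at least `2M`
      have key : δ' * (1 + x) ≤ |a - x| * (2 * K + 2) :=
        mul_le_mul hax (by linarith) hx1.le (abs_nonneg _)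
      have h1 : 1 ≤ (2 * K + 2) / δ' * (|a - x| / (1 + x)) := by
        rw [div_mul_div_comm, one_le_div (by positivity)]
        linarith
      have h3 := one_le_pow₀ (n := 2) h1
      rw [mul_pow, div_pow |a - x|, sq_abs, ← div_pow] at h3
      linarith [hfar x hx a ha, mul_le_mul_of_nonneg_left h3 hM0]
  · rcases le_or_gt K a with haK | haK
    · have h1 := hK a haK
      have h2 := hK x (by linarith)
      calc |f a - f x| = |(f a - l) - (f x - l)| := by ring_nf
        _ ≤ |f a - l| + |f x - l| := abs_sub _ _
        _ ≤ ε + C * q := by linarith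
    · -- `a < K` and `x > 2K + 1` give `|a - x| ≥ (1 + x) / 2`
      have h1 : 1 ≤ (2 * (x - a) / (1 + x)) ^ 2 :=
        one_le_pow₀ ((one_le_div hx1).2 (by linarith))
      have h3 : 1 ≤ 4 * q := h1.trans_eq (by rw [hq]; ring)
      linarith [hfar x hx a ha, mul_le_mul_of_nonneg_left h3 hM0]

end LimitAtTop

section Psem

variable {γ b t : ℝ} {f : ℝ → ℝ}

lemma Psem_eq_tsum_gammaMean (x : ℝ) :
    Psem γ b t f x = exp (-(x / (γ * t))) * ∑' m : ℕ,
      (x / (γ * t)) ^ m / m.factorial * gammaMean (m + b / γ) (fun z => f (γ * z * t)) := by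
  simp only [Psem, gammaMean, neg_div]
  congr 1
  exact tsum_congr fun m => by ring

lemma continuousOn_comp_mul_mul (hγ : 0 < γ) (ht : 0 < t) (hf : ContinuousOn f (Ici 0)) :
    ContinuousOn (fun z => f (γ * z * t)) (Ioi 0) :=
  hf.comp (by fun_prop) fun z hz => mem_Ici.2 (by have := mem_Ioi.1 hz; positivity)

lemma abs_gammaMean_comp_mul_mul_le (hγ : 0 < γ) (hb : 0 < b) (ht : 0 < t)
    (hf : ContinuousOn f (Ici 0)) {M : ℝ} (hM : ∀ y ∈ Ici (0 : ℝ), |f y| ≤ M) (m : ℕ) :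
    |gammaMean (m + b / γ) (fun z => f (γ * z * t))| ≤ M := by
  have hs : 0 < (m : ℝ) + b / γ := by positivity
  simpa [gammaMean_const hs] using abs_gammaMean_sub_le hs (r := 0)
    (continuousOn_comp_mul_mul hγ ht hf) ((GammaIntegral_convergent hs).mul_const M)
    fun z hz => by simpa using hM _ (mem_Ici.2 (by have := mem_Ioi.1 hz; positivity))

lemma abs_Psem_le (hγ : 0 < γ) (hb : 0 < b) (ht : 0 < t) (hf : ContinuousOn f (Ici 0)) {M : ℝ}
    (hM : ∀ y ∈ Ici (0 : ℝ), |f y| ≤ M) {x : ℝ} (hx : 0 ≤ x) : |Psem γ b t f x| ≤ M := by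
  have h := abs_exp_neg_mul_tsum_sub_le (r := 0) (by positivity : 0 ≤ x / (γ * t))
    (fun m => by simpa using abs_gammaMean_comp_mul_mul_le hγ hb ht hf hM m)
    ((hasSum_pow_div_factorial _).mul_right M)
  rwa [sub_zero, ← Psem_eq_tsum_gammaMean, ← mul_assoc, ← exp_add, neg_add_cancel, exp_zero,
    one_mul] at h

lemma continuous_Psem (hγ : 0 < γ) (hb : 0 < b) (ht : 0 < t) (hf : ContinuousOn f (Ici 0))
    {M : ℝ} (hM : ∀ y ∈ Ici (0 : ℝ), |f y| ≤ M) : Continuous (Psem γ b t f) := by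
  rw [funext Psem_eq_tsum_gammaMean]
  exact (continuous_exp.comp (continuous_id.div_const _).neg).mul
    ((continuous_tsum_pow_div_factorial_mul (abs_gammaMean_comp_mul_mul_le hγ hb ht hf hM)).comp
      (continuous_id.div_const _))

lemma abs_Psem_sub_le_of_quadratic (hγ : 0 < γ) (hb : 0 < b) (ht : 0 < t)
    (hf : ContinuousOn f (Ici 0)) {x ε K : ℝ} (hx : 0 ≤ x)
    (hfx : ∀ a ∈ Ici (0 : ℝ), |f a - f x| ≤ ε + K * (a - x) ^ 2) :
    |Psem γ b t f x - f x| ≤ ε + K * (2 * γ * t * x + (γ * b + b ^ 2) * t ^ 2) := by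
  set c := γ * t
  set u := x / c
  have hc : 0 < c := by positivity
  have hxu : x = c * u := (mul_div_cancel₀ x hc.ne').symm
  have hA : ∀ m : ℕ, |gammaMean (m + b / γ) (fun z => f (γ * z * t)) - f x|
      ≤ ε + K * c ^ 2 * ((m + b / γ - u) ^ 2 + (m + b / γ)) := fun m => by
    have hs : 0 < (m : ℝ) + b / γ := by positivity
    refine (abs_gammaMean_sub_le hs (continuousOn_comp_mul_mul hγ ht hf)
      (integrableOn_gammaKernel_mul_quadratic hs ε K c x) fun z hz => ?_).trans_eq ?_
    · have := hfx (γ * z * t) (mem_Ici.2 (by have := mem_Ioi.1 hz; positivity))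
      rwa [show γ * z * t = c * z by ring] at this ⊢
    · rw [gammaMean_quadratic hs, hxu]
      ring
  have hS : HasSum
      (fun m : ℕ => u ^ m / m.factorial * (ε + K * c ^ 2 * ((m + b / γ - u) ^ 2 + (m + b / γ))))
      (ε * exp u + K * c ^ 2 * ((2 * u + b / γ + (b / γ) ^ 2) * exp u)) :=
    (((hasSum_pow_div_factorial u).mul_left ε).add
      ((hasSum_pow_div_factorial_mul_sq_add u (b / γ)).mul_left (K * c ^ 2))).congr_fun
      fun m => by ring
  have h := abs_exp_neg_mul_tsum_sub_le (by positivity : 0 ≤ u) hA hS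
  rw [← Psem_eq_tsum_gammaMean] at h
  refine h.trans_eq ?_
  have he : exp (-u) * exp u = 1 := by rw [← exp_add, neg_add_cancel, exp_zero]
  have hQ : K * c ^ 2 * (2 * u + b / γ + (b / γ) ^ 2)
      = K * (2 * γ * t * x + (γ * b + b ^ 2) * t ^ 2) := by
    rw [hxu]
    simp only [c]
    field_simp
    ring
  linear_combination (ε + K * c ^ 2 * (2 * u + b / γ + (b / γ) ^ 2)) * he + hQ

lemma abs_Psem_sub_le (hγ : 0 < γ) (hb : 0 < b) (ht : 0 < t) (hf : ContinuousOn f (Ici 0))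
    {ε C : ℝ} (hC : 0 ≤ C)
    (hfC : ∀ x ∈ Ici (0 : ℝ), ∀ a ∈ Ici (0 : ℝ), |f a - f x| ≤ ε + C * ((a - x) / (1 + x)) ^ 2)
    {x : ℝ} (hx : 0 ≤ x) :
    |Psem γ b t f x - f x| ≤ ε + C * (t * (2 * γ + (γ * b + b ^ 2) * t)) / (1 + x) := by
  have hx1 : 0 < 1 + x := by linarith
  refine (abs_Psem_sub_le_of_quadratic hγ hb ht hf hx (K := C / (1 + x) ^ 2) fun a ha =>
    (hfC x hx a ha).trans_eq (by rw [div_pow, mul_div_assoc', div_mul_eq_mul_div])).trans ?_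
  rw [add_le_add_iff_left, div_mul_eq_mul_div, div_le_div_iff₀ (by positivity) hx1]
  have hgap : 0 ≤ t * (2 * γ + (γ * b + b ^ 2) * t) * (1 + x)
      - (2 * γ * t * x + (γ * b + b ^ 2) * t ^ 2) := by
    ring_nf
    positivity
  linarith [mul_nonneg (mul_nonneg hC hx1.le) hgap]

lemma tendsto_Psem_atTop (hγ : 0 < γ) (hb : 0 < b) (ht : 0 < t) (hf : ContinuousOn f (Ici 0))
    {l : ℝ} (hl : Tendsto f atTop (𝓝 l)) : Tendsto (Psem γ b t f) atTop (𝓝 l) := by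
  refine Metric.tendsto_nhds.2 fun ε hε => ?_
  obtain ⟨C, hC, hfC⟩ := exists_abs_sub_le_add_mul_sq hf hl (ε := ε / 3) (by positivity)
  have hdecay : Tendsto (fun x => C * (t * (2 * γ + (γ * b + b ^ 2) * t)) / (1 + x)) atTop (𝓝 0) :=
    tendsto_const_nhds.div_atTop (tendsto_atTop_add_const_left _ 1 tendsto_id)
  filter_upwards [eventually_ge_atTop 0, hdecay.eventually_lt_const (by positivity : 0 < ε / 3),
    Metric.tendsto_nhds.1 hl (ε / 3) (by positivity)] with x hx h1 h2
  rw [Real.dist_eq] at h2 ⊢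
  have h3 := abs_Psem_sub_le hγ hb ht hf hC hfC hx
  calc |Psem γ b t f x - l| ≤ |Psem γ b t f x - f x| + |f x - l| := abs_sub_le _ _ _
    _ < ε := by linarith

lemma tendsto_iSup_abs_Psem_sub (hγ : 0 < γ) (hb : 0 < b) (hf : ContinuousOn f (Ici 0))
    {l : ℝ} (hl : Tendsto f atTop (𝓝 l)) :
    Tendsto (fun t => ⨆ x : Ici (0 : ℝ), |Psem γ b t f x - f x|) (𝓝[>] 0) (𝓝 0) := by
  refine Metric.tendsto_nhds.2 fun ε hε => ?_
  obtain ⟨C, hC, hfC⟩ := exists_abs_sub_le_add_mul_sq hf hl (half_pos hε)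
  have hsmall : Tendsto (fun t => C * (t * (2 * γ + (γ * b + b ^ 2) * t))) (𝓝[>] 0) (𝓝 0) := by
    have : Continuous fun t : ℝ => C * (t * (2 * γ + (γ * b + b ^ 2) * t)) := by fun_prop
    simpa using (this.tendsto 0).mono_left nhdsWithin_le_nhds
  filter_upwards [self_mem_nhdsWithin, hsmall.eventually_lt_const (half_pos hε)] with t ht h1
  have hT : 0 ≤ C * (t * (2 * γ + (γ * b + b ^ 2) * t)) := by
    have : 0 < t := ht
    positivity
  have hsup : ⨆ x : Ici (0 : ℝ), |Psem γ b t f x - f x|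
      ≤ ε / 2 + C * (t * (2 * γ + (γ * b + b ^ 2) * t)) :=
    ciSup_le fun x => by
      have hx : 1 ≤ 1 + (x : ℝ) := le_add_of_nonneg_right x.2
      linarith [abs_Psem_sub_le hγ hb ht hf hC hfC x.2, div_le_self hT hx]
  rw [Real.dist_eq, sub_zero, abs_of_nonneg (Real.iSup_nonneg fun _ => abs_nonneg _)]
  linarith

end Psem

/-- Let `γ > 0`, `b > 0`. For every `f ∈ C([0,∞])` and every `t > 0`, `P_t^{γ,b} f` is
continuous on `[0,∞)` with a finite limit at `+∞`, `‖P_t^{γ,b} f‖_∞ ≤ ‖f‖_∞`, and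
`lim_{t → 0⁺} sup_{x ≥ 0} |P_t^{γ,b} f(x) − f(x)| = 0`. -/
theorem stmt12 (γ b : ℝ) (hγ : 0 < γ) (hb : 0 < b) (f : ℝ → ℝ)
    (hf : ContinuousOn f (Set.Ici 0))
    (hlim : ∃ l, Filter.Tendsto f Filter.atTop (nhds l)) :
    (∀ t > (0:ℝ),
      ContinuousOn (Psem γ b t f) (Set.Ici 0) ∧
      (∃ l, Filter.Tendsto (Psem γ b t f) Filter.atTop (nhds l)) ∧
      supIci (Psem γ b t f) ≤ supIci f) ∧
    Filter.Tendsto (fun t => ⨆ x : Set.Ici (0:ℝ), |Psem γ b t f (x : ℝ) - f (x : ℝ)|)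
      (nhdsWithin 0 (Set.Ioi 0)) (nhds 0) := by
  obtain ⟨l, hl⟩ := hlim
  obtain ⟨M, hM⟩ := exists_abs_le_of_continuousOn_of_tendsto hf hl
  have hsup : ∀ y ∈ Ici (0 : ℝ), |f y| ≤ supIci f := fun y hy =>
    le_ciSup (f := fun y : Ici (0 : ℝ) => |f y|) ⟨M, by rintro _ ⟨y, rfl⟩; exact hM y y.2⟩ ⟨y, hy⟩
  refine ⟨fun t ht => ⟨(continuous_Psem hγ hb ht hf hsup).continuousOn,
    ⟨l, tendsto_Psem_atTop hγ hb ht hf hl⟩, ciSup_le fun x => abs_Psem_le hγ hb ht hf hsup x.2⟩,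
    tendsto_iSup_abs_Psem_sub hγ hb hf hl⟩
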